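/- arXiv:0804.0027 — 2 statements merged into one kernel-verified Lean document; each statement's English description precedes it below -/
import Mathlib

section
/- Let G be a finite connected simple graph whose vertex set V is the union of two sets V₁ and V₂ with V₁ ∩ V₂ = {w} for a single vertex w, and suppose every edge of G has both endpoints in V₁ or both endpoints in V₂. Let e be an edge with both endpoints in V₁ and f an edge with both endpoints in V₂. Then: (i) there is no F ⊆ E(G)∖{e,f} such that both F∪{e} and F∪{f} are spanning trees of G (so X(G;e,f) = ∅); and (ii) for every weighting y : E(G) → ℝ, T_e^f(G;y)·T_f^e(G;y) = T_{ef}(G;y)·T^{ef}(G;y). -/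
open Finset

variable {V : Type*}

/-- `T` is (the edge set of) a spanning tree of `G`: `T ⊆ E(G)` and the spanning
subgraph `(V, T)` is connected and acyclic. -/
def IsSpanningTree (G : SimpleGraph V) (T : Finset (Sym2 V)) : Prop :=
  (T : Set (Sym2 V)) ⊆ G.edgeSet ∧
    (SimpleGraph.fromEdgeSet (T : Set (Sym2 V))).Connected ∧
    (SimpleGraph.fromEdgeSet (T : Set (Sym2 V))).IsAcyclic

/-- `y^S = ∏_{c ∈ S} y c`. -/
noncomputable def edgeWeight (y : Sym2 V → ℝ) (S : Finset (Sym2 V)) : ℝ :=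
  ∏ c ∈ S, y c

open Classical in
/-- `T_e^f(G;y) = Σ_{T : e ∈ T, f ∉ T} y^{T∖{e}}` over spanning trees `T`. -/
noncomputable def Tin_eOut_f [Fintype V] [DecidableEq V] (G : SimpleGraph V)
    (e f : Sym2 V) (y : Sym2 V → ℝ) : ℝ :=
  ∑ T ∈ univ.filter (fun T => IsSpanningTree G T ∧ e ∈ T ∧ f ∉ T),
    edgeWeight y (T.erase e)

open Classical in
/-- `T_{ef}(G;y) = Σ_{T : e ∈ T, f ∈ T} y^{T∖{e,f}}` over spanning trees `T`. -/
noncomputable def Tin_ef [Fintype V] [DecidableEq V] (G : SimpleGraph V)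
    (e f : Sym2 V) (y : Sym2 V → ℝ) : ℝ :=
  ∑ T ∈ univ.filter (fun T => IsSpanningTree G T ∧ e ∈ T ∧ f ∈ T),
    edgeWeight y ((T.erase e).erase f)

open Classical in
/-- `T^{ef}(G;y) = Σ_{T : e ∉ T, f ∉ T} y^{T}` over spanning trees `T`. -/
noncomputable def Tout_ef [Fintype V] [DecidableEq V] (G : SimpleGraph V)
    (e f : Sym2 V) (y : Sym2 V → ℝ) : ℝ :=
  ∑ T ∈ univ.filter (fun T => IsSpanningTree G T ∧ e ∉ T ∧ f ∉ T),
    edgeWeight y T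

/-- `F ∈ X(G;e,f)`: `F ⊆ E(G) ∖ {e,f}` and both `F ∪ {e}` and `F ∪ {f}` are
spanning trees of `G`. -/
def MemX [DecidableEq V] (G : SimpleGraph V) (e f : Sym2 V)
    (F : Finset (Sym2 V)) : Prop :=
  e ∉ F ∧ f ∉ F ∧ IsSpanningTree G (insert e F) ∧ IsSpanningTree G (insert f F)

/-! The cut vertex `w` splits `E(G)` into the edges inside `V₁` and the edges inside `V₂`, and a
set of edges is a spanning tree exactly when each of its two parts is a spanning tree of its side.
Hence *splicing* two spanning trees (the `V₁`-part of one with the `V₂`-part of the other) gives a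
spanning tree again. Splicing is an involution on pairs of spanning trees which preserves the
product of the weights and exchanges the pairs `(T ∋ e ∌ f, T' ∋ f ∌ e)` with the pairs
`(S ∋ e, f; S' ∌ e, f)`, which proves (ii). For (i), splicing `F ∪ {f}` with `F ∪ {e}` gives `F`,
which has one edge too few to be a spanning tree. -/

open SimpleGraph

lemma edgeSet_fromEdgeSet_of_subset {G : SimpleGraph V} {s : Set (Sym2 V)}
    (hs : s ⊆ G.edgeSet) : (fromEdgeSet s).edgeSet = s := by
  rw [edgeSet_fromEdgeSet, sdiff_eq_left, Set.disjoint_left]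
  exact fun c hc => G.not_isDiag_of_mem_edgeSet (hs hc)

lemma natCard_edgeSet_fromEdgeSet {G : SimpleGraph V} {T : Finset (Sym2 V)}
    (hT : (T : Set (Sym2 V)) ⊆ G.edgeSet) :
    Nat.card (fromEdgeSet (T : Set (Sym2 V))).edgeSet = #T := by
  rw [edgeSet_fromEdgeSet_of_subset hT, Nat.card_coe_set_eq, Set.ncard_coe_finset]

lemma isSpanningTree_iff [Fintype V] {G : SimpleGraph V} {T : Finset (Sym2 V)} :
    IsSpanningTree G T ↔ (T : Set (Sym2 V)) ⊆ G.edgeSet ∧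
      (fromEdgeSet (T : Set (Sym2 V))).Connected ∧ #T + 1 = Fintype.card V := by
  refine and_congr_right fun hT => ?_
  rw [← natCard_edgeSet_fromEdgeSet hT, ← Nat.card_eq_fintype_card,
    ← isTree_iff_connected_and_card]
  exact ⟨fun h => ⟨h.1, h.2⟩, fun h => ⟨h.1, h.2⟩⟩

lemma card_le_card_add_one_of_connected [Fintype V] {G : SimpleGraph V} {T : Finset (Sym2 V)}
    (hT : (T : Set (Sym2 V)) ⊆ G.edgeSet) (hconn : (fromEdgeSet (T : Set (Sym2 V))).Connected) :
    Fintype.card V ≤ #T + 1 := by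
  rw [← Nat.card_eq_fintype_card, ← natCard_edgeSet_fromEdgeSet hT]
  exact hconn.card_vert_le_card_edgeSet_add_one

lemma reachable_of_walk_to_cutVertex {A : Set V} {w : V} {s : Set (Sym2 V)}
    (hs : ∀ c ∈ s, c ∉ A.sym2 → ∀ x ∈ c, x ∈ A → x = w) {a : V} (ha : a ∈ A)
    (q : (fromEdgeSet s).Walk a w) : (fromEdgeSet (s ∩ A.sym2)).Reachable a w := by
  induction q with
  | nil => rfl
  | @cons u x _ hux q ih =>
    by_cases hA : s(u, x) ∈ A.sym2
    · have hux' : (fromEdgeSet (s ∩ A.sym2)).Adj u x := ⟨⟨hux.1, hA⟩, hux.2⟩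
      exact hux'.reachable.trans (ih hs (Set.mk_mem_sym2_iff.mp hA).2)
    · obtain rfl := hs _ hux.1 hA u (Sym2.mem_mk_left _ _) ha
      rfl

open Classical in
noncomputable def splice (A : Set V) (S T : Finset (Sym2 V)) : Finset (Sym2 V) :=
  {c ∈ S | c ∈ A.sym2} ∪ {c ∈ T | c ∉ A.sym2}

section Splice

variable {A : Set V} {S T : Finset (Sym2 V)} {c : Sym2 V}

lemma mem_splice : c ∈ splice A S T ↔ c ∈ S ∧ c ∈ A.sym2 ∨ c ∈ T ∧ c ∉ A.sym2 := by
  simp [splice]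

lemma coe_splice_subset : (splice A S T : Set (Sym2 V)) ⊆ S ∪ T := by
  intro c hc
  rcases mem_splice.mp hc with ⟨hcS, -⟩ | ⟨hcT, -⟩
  exacts [Or.inl hcS, Or.inr hcT]

lemma splice_splice_splice : splice A (splice A S T) (splice A T S) = S := by
  ext c
  by_cases hc : c ∈ A.sym2 <;> simp [mem_splice, hc]

lemma card_splice_add_card_splice : #(splice A S T) + #(splice A T S) = #S + #T := by
  classical
  simp only [splice, card_union_of_disjoint (disjoint_filter_filter_not _ _ _)]
  rw [← card_filter_add_card_filter_not (s := S) (· ∈ A.sym2),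
    ← card_filter_add_card_filter_not (s := T) (· ∈ A.sym2)]
  ring

lemma edgeWeight_splice_mul_edgeWeight_splice (y : Sym2 V → ℝ) :
    edgeWeight y (splice A S T) * edgeWeight y (splice A T S) =
      edgeWeight y S * edgeWeight y T := by
  classical
  simp only [edgeWeight, splice, prod_union (disjoint_filter_filter_not _ _ _)]
  rw [← prod_filter_mul_prod_filter_not S (· ∈ A.sym2),
    ← prod_filter_mul_prod_filter_not T (· ∈ A.sym2)]
  ring

end Splice

def IsSpliceClosed (G : SimpleGraph V) (A : Set V) : Prop :=
  ∀ ⦃T₁ T₂ : Finset (Sym2 V)⦄, IsSpanningTree G T₁ → IsSpanningTree G T₂ →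
    IsSpanningTree G (splice A T₁ T₂)

section CutVertex

variable {G : SimpleGraph V} {V₁ V₂ : Set V} {w : V}

lemma notMem_sym2_of_mem_sym2 (hinter : V₁ ∩ V₂ = {w}) {c : Sym2 V} (hc : c ∈ G.edgeSet)
    (hc₂ : c ∈ V₂.sym2) : c ∉ V₁.sym2 := by
  intro hc₁
  have hcw : c ∈ ({w} : Set V).sym2 := hinter ▸ (Set.sym2_inter V₁ V₂).symm ▸ ⟨hc₁, hc₂⟩
  rw [Set.sym2_singleton, Set.mem_singleton_iff] at hcw
  exact G.not_isDiag_of_mem_edgeSet hc (hcw ▸ Sym2.mk_isDiag_iff.mpr rfl)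

lemma reachable_cutVertex_of_connected (hinter : V₁ ∩ V₂ = {w})
    (hedges : ∀ c ∈ G.edgeSet, c ∈ V₁.sym2 ∨ c ∈ V₂.sym2) {T : Set (Sym2 V)}
    (hT : T ⊆ G.edgeSet) (hconn : (fromEdgeSet T).Connected) {z : V} (hz : z ∈ V₁) :
    (fromEdgeSet (T ∩ V₁.sym2)).Reachable z w := by
  obtain ⟨q⟩ := hconn.preconnected z w
  refine reachable_of_walk_to_cutVertex (fun c hc hc₁ x hx hx₁ => ?_) hz q
  have hc₂ := (hedges c (hT hc)).resolve_left hc₁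
  exact hinter.subset ⟨hx₁, Set.mem_sym2_iff_subset.mp hc₂ hx⟩

lemma connected_fromEdgeSet_splice (hunion : V₁ ∪ V₂ = Set.univ) (hinter : V₁ ∩ V₂ = {w})
    (hedges : ∀ c ∈ G.edgeSet, c ∈ V₁.sym2 ∨ c ∈ V₂.sym2) {T₁ T₂ : Finset (Sym2 V)}
    (hT₁ : (T₁ : Set (Sym2 V)) ⊆ G.edgeSet) (hT₂ : (T₂ : Set (Sym2 V)) ⊆ G.edgeSet)
    (hconn₁ : (fromEdgeSet (T₁ : Set (Sym2 V))).Connected)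
    (hconn₂ : (fromEdgeSet (T₂ : Set (Sym2 V))).Connected) :
    (fromEdgeSet (splice V₁ T₁ T₂ : Set (Sym2 V))).Connected := by
  have hw : ∀ z, (fromEdgeSet (splice V₁ T₁ T₂ : Set (Sym2 V))).Reachable z w := by
    intro z
    rcases (hunion ▸ Set.mem_univ z : z ∈ V₁ ∪ V₂) with hz | hz
    · refine (reachable_cutVertex_of_connected hinter hedges hT₁ hconn₁ hz).mono
        (fromEdgeSet_mono ?_)
      rintro c ⟨hc, hc₁⟩
      exact mem_splice.mpr (Or.inl ⟨hc, hc₁⟩)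
    · refine (reachable_cutVertex_of_connected (Set.inter_comm V₁ V₂ ▸ hinter)
        (fun c hc => (hedges c hc).symm) hT₂ hconn₂ hz).mono (fromEdgeSet_mono ?_)
      rintro c ⟨hc, hc₂⟩
      exact mem_splice.mpr (Or.inr ⟨hc, notMem_sym2_of_mem_sym2 hinter (hT₂ hc) hc₂⟩)
  have : Nonempty V := ⟨w⟩
  exact ⟨fun u v => (hw u).trans (hw v).symm⟩

/-- Both splices of `T₁` and `T₂` are connected, so each has at least `|V| - 1` edges; as together
they have `|T₁| + |T₂| = 2 (|V| - 1)` edges, each has exactly `|V| - 1` and is a tree. -/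
lemma isSpliceClosed_of_cutVertex [Fintype V] (hunion : V₁ ∪ V₂ = Set.univ)
    (hinter : V₁ ∩ V₂ = {w}) (hedges : ∀ c ∈ G.edgeSet, c ∈ V₁.sym2 ∨ c ∈ V₂.sym2) :
    IsSpliceClosed G V₁ := by
  intro T₁ T₂ h₁ h₂
  obtain ⟨hT₁, hconn₁, hcard₁⟩ := isSpanningTree_iff.mp h₁
  obtain ⟨hT₂, hconn₂, hcard₂⟩ := isSpanningTree_iff.mp h₂
  have hsub : ∀ {S T : Finset (Sym2 V)}, (S : Set (Sym2 V)) ⊆ G.edgeSet →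
      (T : Set (Sym2 V)) ⊆ G.edgeSet → (splice V₁ S T : Set (Sym2 V)) ⊆ G.edgeSet :=
    fun hS hT => coe_splice_subset.trans (Set.union_subset hS hT)
  have hconn₁₂ := connected_fromEdgeSet_splice hunion hinter hedges hT₁ hT₂ hconn₁ hconn₂
  have hconn₂₁ := connected_fromEdgeSet_splice hunion hinter hedges hT₂ hT₁ hconn₂ hconn₁
  have hle₁₂ := card_le_card_add_one_of_connected (hsub hT₁ hT₂) hconn₁₂
  have hle₂₁ := card_le_card_add_one_of_connected (hsub hT₂ hT₁) hconn₂₁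
  have hsum := card_splice_add_card_splice (A := V₁) (S := T₁) (T := T₂)
  exact isSpanningTree_iff.mpr ⟨hsub hT₁ hT₂, hconn₁₂, by omega⟩

end CutVertex

section Exchange

variable [DecidableEq V] {G : SimpleGraph V} {A : Set V} {e f : Sym2 V}

lemma not_memX_of_isSpliceClosed [Fintype V] (hA : IsSpliceClosed G A) (he : e ∈ A.sym2)
    (hf : f ∉ A.sym2) (F : Finset (Sym2 V)) : ¬ MemX G e f F := by
  rintro ⟨heF, -, hTe, hTf⟩
  have hsplice : splice A (insert f F) (insert e F) = F := by
    ext c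
    by_cases hc : c ∈ A.sym2
    · have hcf : c ≠ f := by rintro rfl; exact hf hc
      simp [mem_splice, hc, hcf]
    · have hce : c ≠ e := by rintro rfl; exact hc he
      simp [mem_splice, hc, hce]
  have hF := (isSpanningTree_iff.mp (hsplice ▸ hA hTf hTe)).2.2
  have hFe := (isSpanningTree_iff.mp hTe).2.2
  rw [card_insert_of_notMem heF] at hFe
  omega

lemma edgeWeight_erase_mul_edgeWeight_erase (y : Sym2 V → ℝ) (he : e ∈ A.sym2)
    (hf : f ∉ A.sym2) (T T' : Finset (Sym2 V)) :
    edgeWeight y (T.erase e) * edgeWeight y (T'.erase f) =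
      edgeWeight y (((splice A T T').erase e).erase f) * edgeWeight y (splice A T' T) := by
  rw [← edgeWeight_splice_mul_edgeWeight_splice (A := A)]
  congr 2 <;> ext c <;> by_cases hc : c ∈ A.sym2
  all_goals
    have hcf : c ∈ A.sym2 → c ≠ f := by rintro hc rfl; exact hf hc
    have hce : c ∉ A.sym2 → c ≠ e := by rintro hc rfl; exact hc he
    simp [mem_splice, hc, hcf, hce]

lemma Tin_eOut_f_mul_eq_of_isSpliceClosed [Fintype V] (hA : IsSpliceClosed G A)
    (he : e ∈ A.sym2) (hf : f ∉ A.sym2) (y : Sym2 V → ℝ) :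
    Tin_eOut_f G e f y * Tin_eOut_f G f e y = Tin_ef G e f y * Tout_ef G e f y := by
  classical
  simp only [Tin_eOut_f, Tin_ef, Tout_ef]
  rw [sum_mul_sum, sum_mul_sum, ← sum_product', ← sum_product']
  let swap : Finset (Sym2 V) × Finset (Sym2 V) → Finset (Sym2 V) × Finset (Sym2 V) :=
    fun p => (splice A p.1 p.2, splice A p.2 p.1)
  refine sum_nbij' swap swap ?_ ?_ ?_ ?_ ?_
  · rintro ⟨T, T'⟩ h
    simp only [mem_product, mem_filter, mem_univ, true_and] at h ⊢
    obtain ⟨⟨hT, heT, hfT⟩, hT', hfT', heT'⟩ := h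
    exact ⟨⟨hA hT hT', by simp [swap, mem_splice, *]⟩, hA hT' hT, by simp [swap, mem_splice, *]⟩
  · rintro ⟨S, S'⟩ h
    simp only [mem_product, mem_filter, mem_univ, true_and] at h ⊢
    obtain ⟨⟨hS, heS, hfS⟩, hS', heS', hfS'⟩ := h
    exact ⟨⟨hA hS hS', by simp [swap, mem_splice, *]⟩, hA hS' hS, by simp [swap, mem_splice, *]⟩
  · rintro ⟨T, T'⟩ -
    simp only [swap, splice_splice_splice]
  · rintro ⟨S, S'⟩ -
    simp only [swap, splice_splice_splice]
  · rintro ⟨T, T'⟩ -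
    exact edgeWeight_erase_mul_edgeWeight_erase y he hf T T'

end Exchange

theorem cutVertex_X_empty_general [Fintype V] [DecidableEq V]
    (G : SimpleGraph V)
    (V₁ V₂ : Set V) (w : V) (hunion : V₁ ∪ V₂ = Set.univ) (hinter : V₁ ∩ V₂ = {w})
    (hedges : ∀ c ∈ G.edgeSet, (∀ x ∈ c, x ∈ V₁) ∨ (∀ x ∈ c, x ∈ V₂))
    (e f : Sym2 V) (hfE : f ∈ G.edgeSet)
    (he : ∀ x ∈ e, x ∈ V₁) (hf : ∀ x ∈ f, x ∈ V₂)
    (y : Sym2 V → ℝ) :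
    (¬ ∃ F : Finset (Sym2 V), MemX G e f F) ∧
    Tin_eOut_f G e f y * Tin_eOut_f G f e y = Tin_ef G e f y * Tout_ef G e f y := by
  have hsplice : IsSpliceClosed G V₁ := isSpliceClosed_of_cutVertex hunion hinter fun c hc =>
    (hedges c hc).imp Set.mem_sym2_iff_subset.mpr Set.mem_sym2_iff_subset.mpr
  have he₁ : e ∈ V₁.sym2 := Set.mem_sym2_iff_subset.mpr he
  have hf₁ : f ∉ V₁.sym2 := notMem_sym2_of_mem_sym2 hinter hfE (Set.mem_sym2_iff_subset.mpr hf)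
  exact ⟨fun ⟨F, hF⟩ => not_memX_of_isSpliceClosed hsplice he₁ hf₁ F hF,
    Tin_eOut_f_mul_eq_of_isSpliceClosed hsplice he₁ hf₁ y⟩

/-- If a connected graph `G` is the union of two subgraphs meeting in the single vertex `w`
(every edge lies inside `V₁` or inside `V₂`), `e` is an edge inside `V₁` and `f` is an
edge inside `V₂`, then `X(G;e,f) = ∅` and `T_e^f · T_f^e = T_{ef} · T^{ef}`. -/
theorem cutVertex_X_empty [Fintype V] [DecidableEq V]
    (G : SimpleGraph V) (hG : G.Connected)
    (V₁ V₂ : Set V) (w : V) (hunion : V₁ ∪ V₂ = Set.univ) (hinter : V₁ ∩ V₂ = {w})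
    (hedges : ∀ c ∈ G.edgeSet, (∀ x ∈ c, x ∈ V₁) ∨ (∀ x ∈ c, x ∈ V₂))
    (e f : Sym2 V) (heE : e ∈ G.edgeSet) (hfE : f ∈ G.edgeSet)
    (he : ∀ x ∈ e, x ∈ V₁) (hf : ∀ x ∈ f, x ∈ V₂)
    (y : Sym2 V → ℝ) :
    (¬ ∃ F : Finset (Sym2 V), MemX G e f F) ∧
    Tin_eOut_f G e f y * Tin_eOut_f G f e y = Tin_ef G e f y * Tout_ef G e f y :=
  cutVertex_X_empty_general G V₁ V₂ w hunion hinter hedges e f hfE he hf y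
end

section
/- Let G be a finite connected simple graph with at least three vertices, and let v* be a vertex of degree 2 whose two incident edges are e = {a, v*} and f = {b, v*} (with a ≠ b). Orient e and f toward v*, i.e. take u₂ = v* as the head of e and w₂ = v* as the head of f. Then for every weighting y : E(G) → ℝ: (i) T^{ef}(G;y) = 0, i.e. no spanning tree of G avoids both e and f; (ii) X⁺(G;e,f;y) = 0; and (iii) T_e^f(G;y) = T_f^e(G;y) = X⁻(G;e,f;y) = Σ_{T'} y^{T'}, where T' ranges over sets T' ⊆ E(G)∖{e,f} for which (V∖{v*}, T') is a tree spanning V∖{v*} (that is, T' is a spanning tree of the induced subgraph G − v*). -/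
open Finset

variable {V : Type*}

open Classical in
/-- The generating polynomial of those `F ∈ X(G;e,f)` for which the vertices `p` and `q`
lie in the same component of `(V, F)`.  With `p = u₂` (head of `e`) and `q = w₁`
(tail of `f`) this is `X⁺(G;e,f;y)`; with `q = w₂` (head of `f`) it is `X⁻(G;e,f;y)`. -/
noncomputable def Xval [Fintype V] [DecidableEq V] (G : SimpleGraph V)
    (e f : Sym2 V) (p q : V) (y : Sym2 V → ℝ) : ℝ :=
  ∑ F ∈ univ.filter (fun F => MemX G e f F ∧
      (SimpleGraph.fromEdgeSet (F : Set (Sym2 V))).Reachable p q),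
    edgeWeight y F

/-- `(W, T)` is a tree spanning `W`: every edge of `T` has both endpoints in `W`, any
two vertices of `W` are joined by a path of edges of `T`, and `T` contains no cycle. -/
def IsTreeOn (W : Set V) (T : Finset (Sym2 V)) : Prop :=
  (∀ c ∈ T, ∀ x ∈ c, x ∈ W) ∧
  (∀ u ∈ W, ∀ v ∈ W, (SimpleGraph.fromEdgeSet (T : Set (Sym2 V))).Reachable u v) ∧
  (SimpleGraph.fromEdgeSet (T : Set (Sym2 V))).IsAcyclic

/-!
Every edge at `v` is `e` or `f`, so in `(V, F)` with `e, f ∉ F` the vertex `v` is isolated and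
reaches only itself: no spanning tree avoids both `e` and `f`, and no `F ∈ X(G;e,f)` joins `v`
to `b`. For a set `T'` of edges of `G` missing `v` and an edge `s(c, v)`, the set
`T' ∪ {s(c, v)}` is a spanning tree of `G` iff `T'` is a tree on `V ∖ {v}`: the pendant edge
joins two vertices that `T'` does not connect, so acyclicity is unaffected, and collapsing `v`
onto `c` turns walks using it into walks of `T'`. Hence `T ↦ T ∖ {e}`, `T ↦ T ∖ {f}` and the
identity on `X⁻(G;e,f)` are bijections onto the spanning trees of `G - v`.
-/

namespace SimpleGraph

variable {W : Type*} {G : SimpleGraph V} {H : SimpleGraph W}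

theorem Reachable.map_of_forall_adj (f : V → W)
    (hf : ∀ x y, G.Adj x y → H.Reachable (f x) (f y)) {u w : V} (huw : G.Reachable u w) :
    H.Reachable (f u) (f w) := by
  rw [reachable_iff_reflTransGen] at huw ⊢
  exact huw.lift' f fun x y hxy => (reachable_iff_reflTransGen _ _).mp (hf x y hxy)

variable {s : Set (Sym2 V)} {v c : V}

theorem eq_of_reachable_fromEdgeSet_of_forall_notMem (hv : ∀ d ∈ s, v ∉ d) {x : V}
    (h : (fromEdgeSet s).Reachable v x) : x = v := by
  obtain ⟨_ | ⟨hadj, _⟩⟩ := h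
  · rfl
  · exact absurd (Sym2.mem_mk_left v _) (hv _ ((fromEdgeSet_adj _).mp hadj).1)

theorem fromEdgeSet_insert : fromEdgeSet (insert s(c, v) s) = fromEdgeSet s ⊔ edge c v := by
  rw [Set.insert_eq, fromEdgeSet_union, sup_comm]
  rfl

theorem reachable_of_reachable_fromEdgeSet_insert [DecidableEq V] (hv : ∀ d ∈ s, v ∉ d)
    {u w : V} (hu : u ≠ v) (hw : w ≠ v) (h : (fromEdgeSet (insert s(c, v) s)).Reachable u w) :
    (fromEdgeSet s).Reachable u w := by
  -- collapse `v` onto `c`: the pendant edge becomes a single vertex, every other edge survives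
  have hcontract := h.map_of_forall_adj (H := fromEdgeSet s) (fun x => if x = v then c else x)
    fun x y hxy => by
      obtain ⟨hxy | hxy, hne⟩ := (fromEdgeSet_adj _).mp hxy
      · rcases Sym2.eq_iff.mp hxy with ⟨rfl, rfl⟩ | ⟨rfl, rfl⟩ <;> simp
      · have hx : x ≠ v := fun h => hv _ hxy (h ▸ Sym2.mem_mk_left x y)
        have hy : y ≠ v := fun h => hv _ hxy (h ▸ Sym2.mem_mk_right x y)
        simpa [hx, hy] using ((fromEdgeSet_adj _).mpr ⟨hxy, hne⟩).reachable
  simpa [hu, hw] using hcontract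

theorem isAcyclic_fromEdgeSet_insert_iff (hv : ∀ d ∈ s, v ∉ d) (hcv : c ≠ v) :
    (fromEdgeSet (insert s(c, v) s)).IsAcyclic ↔ (fromEdgeSet s).IsAcyclic := by
  rw [fromEdgeSet_insert]
  exact isAcyclic_add_edge_iff_of_not_reachable c v
    fun h => hcv (eq_of_reachable_fromEdgeSet_of_forall_notMem hv h.symm)

end SimpleGraph

open SimpleGraph

theorem Finset.coe_subset_diff_pair_iff {α : Type*} {s : Set α} {T : Finset α} {a b : α} :
    (T : Set α) ⊆ s \ {a, b} ↔ (T : Set α) ⊆ s ∧ a ∉ T ∧ b ∉ T := by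
  simp [Set.subset_sdiff, Set.disjoint_insert_right]

theorem isSpanningTree_insert_iff_isTreeOn {G : SimpleGraph V} {T : Finset (Sym2 V)} {c v : V}
    [DecidableEq V] (hTE : (T : Set (Sym2 V)) ⊆ G.edgeSet) (hTv : ∀ d ∈ T, v ∉ d)
    (hcv : s(c, v) ∈ G.edgeSet) :
    IsSpanningTree G (insert s(c, v) T) ↔ IsTreeOn {v}ᶜ T := by
  have hc : c ≠ v := G.ne_of_adj hcv
  have hTv' : ∀ d ∈ (T : Set (Sym2 V)), v ∉ d := hTv
  simp only [IsSpanningTree, IsTreeOn, coe_insert, Set.insert_subset_iff, hcv, hTE, true_and,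
    isAcyclic_fromEdgeSet_insert_iff hTv' hc, Set.mem_compl_singleton_iff]
  constructor
  · rintro ⟨hconn, hac⟩
    refine ⟨fun d hd x hx hxv => hTv d hd (hxv ▸ hx), fun u hu w hw => ?_, hac⟩
    exact reachable_of_reachable_fromEdgeSet_insert hTv' hu hw (hconn.preconnected u w)
  · rintro ⟨-, hreach, hac⟩
    have hle := fromEdgeSet_mono (Set.subset_insert s(c, v) (T : Set (Sym2 V)))
    have hcv' : (fromEdgeSet (insert s(c, v) (T : Set (Sym2 V)))).Adj c v :=
      (fromEdgeSet_adj _).mpr ⟨Set.mem_insert _ _, hc⟩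
    have to_v : ∀ u, (fromEdgeSet (insert s(c, v) (T : Set (Sym2 V)))).Reachable u v := by
      intro u
      by_cases hu : u = v
      · exact hu ▸ Reachable.refl u
      · exact ((hreach u hu c hc).mono hle).trans hcv'.reachable
    exact ⟨(connected_iff _).mpr ⟨fun u w => (to_v u).trans (to_v w).symm, ⟨c⟩⟩, hac⟩

section DegreeTwo

variable {G : SimpleGraph V} {v : V} {e f : Sym2 V}

theorem forall_notMem_of_subset_edgeSet (hdeg : ∀ d ∈ G.edgeSet, v ∈ d → d = e ∨ d = f)
    {T : Finset (Sym2 V)} (hT : (T : Set (Sym2 V)) ⊆ G.edgeSet) (heT : e ∉ T) (hfT : f ∉ T) :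
    ∀ d ∈ T, v ∉ d := by
  intro d hd hvd
  rcases hdeg d (hT hd) hvd with rfl | rfl
  exacts [heT hd, hfT hd]

theorem isSpanningTree_insert_iff_isTreeOn_of_subset_diff [DecidableEq V]
    (hdeg : ∀ d ∈ G.edgeSet, v ∈ d → d = e ∨ d = f) {T : Finset (Sym2 V)}
    (hT : (T : Set (Sym2 V)) ⊆ G.edgeSet \ {e, f}) {c : V} (hcv : s(c, v) ∈ G.edgeSet) :
    IsSpanningTree G (insert s(c, v) T) ↔ IsTreeOn {v}ᶜ T := by
  obtain ⟨hTE, heT, hfT⟩ := coe_subset_diff_pair_iff.mp hT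
  exact isSpanningTree_insert_iff_isTreeOn hTE (forall_notMem_of_subset_edgeSet hdeg hTE heT hfT)
    hcv

open Classical

/-- `T(G - v; y)`, where `e` and `f` are the edges of `G` at `v`. -/
noncomputable def deleteVertexTreeSum [Fintype V] (G : SimpleGraph V) (e f : Sym2 V) (v : V)
    (y : Sym2 V → ℝ) : ℝ :=
  ∑ T' ∈ univ.filter (fun T' : Finset (Sym2 V) =>
    (T' : Set (Sym2 V)) ⊆ G.edgeSet \ {e, f} ∧ IsTreeOn ({v}ᶜ : Set V) T'), edgeWeight y T'

theorem deleteVertexTreeSum_comm [Fintype V] (G : SimpleGraph V) (e f : Sym2 V) (v : V)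
    (y : Sym2 V → ℝ) :
    deleteVertexTreeSum G f e v y = deleteVertexTreeSum G e f v y := by
  unfold deleteVertexTreeSum
  rw [Set.pair_comm]

theorem Tout_ef_eq_zero [Fintype V] [DecidableEq V]
    (hdeg : ∀ d ∈ G.edgeSet, v ∈ d → d = e ∨ d = f) {u : V} (hu : u ≠ v) (y : Sym2 V → ℝ) :
    Tout_ef G e f y = 0 := by
  refine sum_eq_zero fun T hT => absurd ?_ hu
  obtain ⟨-, ⟨hTE, hconn, -⟩, heT, hfT⟩ := mem_filter.mp hT
  exact eq_of_reachable_fromEdgeSet_of_forall_notMem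
    (forall_notMem_of_subset_edgeSet hdeg hTE heT hfT) (hconn.preconnected v u)

theorem Xval_eq_zero_of_ne [Fintype V] [DecidableEq V]
    (hdeg : ∀ d ∈ G.edgeSet, v ∈ d → d = e ∨ d = f) {q : V} (hq : q ≠ v) (y : Sym2 V → ℝ) :
    Xval G e f v q y = 0 := by
  refine sum_eq_zero fun F hF => absurd ?_ hq
  obtain ⟨-, ⟨heF, hfF, ⟨hsub, -, -⟩, -⟩, hreach⟩ := mem_filter.mp hF
  have hFE : (F : Set (Sym2 V)) ⊆ G.edgeSet := (coe_subset.mpr (subset_insert e F)).trans hsub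
  exact eq_of_reachable_fromEdgeSet_of_forall_notMem
    (forall_notMem_of_subset_edgeSet hdeg hFE heF hfF) hreach

theorem Tin_eOut_f_eq_deleteVertexTreeSum [Fintype V] [DecidableEq V] {c : V}
    (hdeg : ∀ d ∈ G.edgeSet, v ∈ d → d = s(c, v) ∨ d = f) (hcv : s(c, v) ∈ G.edgeSet)
    (hf : f ≠ s(c, v)) (y : Sym2 V → ℝ) :
    Tin_eOut_f G s(c, v) f y = deleteVertexTreeSum G s(c, v) f v y := by
  refine sum_nbij' (fun T => T.erase s(c, v)) (insert s(c, v)) ?_ ?_ ?_ ?_ fun _ _ => rfl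
  · intro T hT
    obtain ⟨-, hTtree, heT, hfT⟩ := mem_filter.mp hT
    have hsub : ((T.erase s(c, v) : Finset (Sym2 V)) : Set (Sym2 V)) ⊆
        G.edgeSet \ {s(c, v), f} :=
      coe_subset_diff_pair_iff.mpr ⟨(coe_subset.mpr (erase_subset _ _)).trans hTtree.1,
        notMem_erase _ _, fun h => hfT (mem_of_mem_erase h)⟩
    refine mem_filter.mpr ⟨mem_univ _, hsub, ?_⟩
    rwa [← isSpanningTree_insert_iff_isTreeOn_of_subset_diff hdeg hsub hcv, insert_erase heT]
  · intro T hT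
    obtain ⟨-, hsub, htree⟩ := mem_filter.mp hT
    refine mem_filter.mpr ⟨mem_univ _,
      (isSpanningTree_insert_iff_isTreeOn_of_subset_diff hdeg hsub hcv).mpr htree,
      mem_insert_self _ _, ?_⟩
    exact mem_insert.not.mpr (not_or.mpr ⟨hf, (coe_subset_diff_pair_iff.mp hsub).2.2⟩)
  · intro T hT
    exact insert_erase (mem_filter.mp hT).2.2.1
  · intro T hT
    exact erase_insert (coe_subset_diff_pair_iff.mp (mem_filter.mp hT).2.1).2.1

theorem memX_iff_isTreeOn [DecidableEq V] {a b : V}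
    (hdeg : ∀ d ∈ G.edgeSet, v ∈ d → d = s(a, v) ∨ d = s(b, v))
    (haE : s(a, v) ∈ G.edgeSet) (hbE : s(b, v) ∈ G.edgeSet) (F : Finset (Sym2 V)) :
    MemX G s(a, v) s(b, v) F ↔
      (F : Set (Sym2 V)) ⊆ G.edgeSet \ {s(a, v), s(b, v)} ∧ IsTreeOn {v}ᶜ F := by
  constructor
  · rintro ⟨heF, hfF, hTa, -⟩
    have hsub : (F : Set (Sym2 V)) ⊆ G.edgeSet \ {s(a, v), s(b, v)} :=
      coe_subset_diff_pair_iff.mpr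
        ⟨(coe_subset.mpr (subset_insert _ F)).trans hTa.1, heF, hfF⟩
    exact ⟨hsub, (isSpanningTree_insert_iff_isTreeOn_of_subset_diff hdeg hsub haE).mp hTa⟩
  · rintro ⟨hsub, htree⟩
    obtain ⟨-, heF, hfF⟩ := coe_subset_diff_pair_iff.mp hsub
    exact ⟨heF, hfF, (isSpanningTree_insert_iff_isTreeOn_of_subset_diff hdeg hsub haE).mpr htree,
      (isSpanningTree_insert_iff_isTreeOn_of_subset_diff hdeg hsub hbE).mpr htree⟩

theorem Xval_self_eq_deleteVertexTreeSum [Fintype V] [DecidableEq V] {a b : V}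
    (hdeg : ∀ d ∈ G.edgeSet, v ∈ d → d = s(a, v) ∨ d = s(b, v))
    (haE : s(a, v) ∈ G.edgeSet) (hbE : s(b, v) ∈ G.edgeSet) (y : Sym2 V → ℝ) :
    Xval G s(a, v) s(b, v) v v y = deleteVertexTreeSum G s(a, v) s(b, v) v y := by
  refine sum_congr (filter_congr fun F _ => ?_) fun _ _ => rfl
  rw [memX_iff_isTreeOn hdeg haE hbE, and_iff_left (Reachable.refl v)]

end DegreeTwo

open Classical in
theorem degree_two_vertex_reduction_general [Fintype V] [DecidableEq V]
    (G : SimpleGraph V)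
    (v a b : V) (hab : a ≠ b) (e f : Sym2 V)
    (he : e = s(a, v)) (hf : f = s(b, v))
    (heE : e ∈ G.edgeSet) (hfE : f ∈ G.edgeSet)
    (hdeg : ∀ c ∈ G.edgeSet, v ∈ c → c = e ∨ c = f)
    (y : Sym2 V → ℝ) :
    Tout_ef G e f y = 0 ∧
    Xval G e f v b y = 0 ∧
    Tin_eOut_f G e f y =
      (∑ T' ∈ univ.filter (fun T' : Finset (Sym2 V) =>
        (T' : Set (Sym2 V)) ⊆ G.edgeSet \ {e, f} ∧ IsTreeOn ({v}ᶜ : Set V) T'),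
        edgeWeight y T') ∧
    Tin_eOut_f G f e y =
      (∑ T' ∈ univ.filter (fun T' : Finset (Sym2 V) =>
        (T' : Set (Sym2 V)) ⊆ G.edgeSet \ {e, f} ∧ IsTreeOn ({v}ᶜ : Set V) T'),
        edgeWeight y T') ∧
    Xval G e f v v y =
      (∑ T' ∈ univ.filter (fun T' : Finset (Sym2 V) =>
        (T' : Set (Sym2 V)) ⊆ G.edgeSet \ {e, f} ∧ IsTreeOn ({v}ᶜ : Set V) T'),
        edgeWeight y T') := by
  subst he hf
  have hba : s(b, v) ≠ s(a, v) := fun h => hab (Sym2.congr_left.mp h).symm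
  have hdeg' : ∀ d ∈ G.edgeSet, v ∈ d → d = s(b, v) ∨ d = s(a, v) :=
    fun d hd hvd => (hdeg d hd hvd).symm
  exact ⟨Tout_ef_eq_zero hdeg (G.ne_of_adj heE) y,
    Xval_eq_zero_of_ne hdeg (G.ne_of_adj hfE) y,
    Tin_eOut_f_eq_deleteVertexTreeSum hdeg heE hba y,
    (Tin_eOut_f_eq_deleteVertexTreeSum hdeg' hfE hba.symm y).trans (deleteVertexTreeSum_comm ..),
    Xval_self_eq_deleteVertexTreeSum hdeg heE hfE y⟩

open Classical in
/-- **Case 2 (iii) of the induction.**  Let `v` be a degree-2 vertex of the finite connected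
simple graph `G` (with at least 3 vertices), with incident edges `e = s(a,v)` and
`f = s(b,v)`, both oriented towards `v` (heads `u₂ = v`, `w₂ = v`, so `w₁ = b`).  Then
`T^{ef}(G;y) = 0`, `X⁺(G;e,f;y) = 0`, and
`T_e^f(G;y) = T_f^e(G;y) = X⁻(G;e,f;y) = T(G ∖ v; y)`,
the last being the generating polynomial of trees spanning `V ∖ {v}` by edges of
`E(G) ∖ {e,f}`. -/
theorem degree_two_vertex_reduction [Fintype V] [DecidableEq V]
    (G : SimpleGraph V) (hG : G.Connected) (hV : 3 ≤ Fintype.card V)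
    (v a b : V) (hab : a ≠ b) (e f : Sym2 V)
    (he : e = s(a, v)) (hf : f = s(b, v))
    (heE : e ∈ G.edgeSet) (hfE : f ∈ G.edgeSet)
    (hdeg : ∀ c ∈ G.edgeSet, v ∈ c → c = e ∨ c = f)
    (y : Sym2 V → ℝ) :
    Tout_ef G e f y = 0 ∧
    Xval G e f v b y = 0 ∧
    Tin_eOut_f G e f y =
      (∑ T' ∈ univ.filter (fun T' : Finset (Sym2 V) =>
        (T' : Set (Sym2 V)) ⊆ G.edgeSet \ {e, f} ∧ IsTreeOn ({v}ᶜ : Set V) T'),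
        edgeWeight y T') ∧
    Tin_eOut_f G f e y =
      (∑ T' ∈ univ.filter (fun T' : Finset (Sym2 V) =>
        (T' : Set (Sym2 V)) ⊆ G.edgeSet \ {e, f} ∧ IsTreeOn ({v}ᶜ : Set V) T'),
        edgeWeight y T') ∧
    Xval G e f v v y =
      (∑ T' ∈ univ.filter (fun T' : Finset (Sym2 V) =>
        (T' : Set (Sym2 V)) ⊆ G.edgeSet \ {e, f} ∧ IsTreeOn ({v}ᶜ : Set V) T'),
        edgeWeight y T') :=
  degree_two_vertex_reduction_general G v a b hab e f he hf heE hfE hdeg y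
end
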